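/- Let u(x,y) = |x|^{4/3} − |y|^{4/3} on ℝ², which is of class C¹. Consider the curves γ₁(t) = ((1 − (8/9)t)^{3/2}, 0) for t ∈ [0, 9/8), γ₂(t) = (0, (1 + (8/9)t)^{3/2}) for t ≥ 0, and γ₃(t) = ((1 − (8/9)t)^{3/2}, ((8/9)t)^{3/2}) for t ∈ [0, 9/8]. Then: (a) each γᵢ satisfies the gradient dynamics γᵢ'(t) = −∇u(γᵢ(t)) on its domain; (b) |∇u(γ₁(t))| = (4/3)√(1 − (8/9)t), which is strictly decreasing in t, and |∇u(γ₂(t))| = (4/3)√(1 + (8/9)t), which is strictly increasing in t; (c) γ₁ and γ₃ are two distinct solutions of the same initial value problem γ' = −∇u(γ), γ(0) = (1,0), and |∇u(γ₃(t))| = 4/3 is constant in t. -/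

import Mathlib

/-!
Write `φ x = (4/3)|x|^{1/3} sgn x` (`absRpowFourThirdsDeriv`), so that `∇u(x, y) = (φ x, -φ y)`
and the flow decouples into `x' = -φ x`, `y' = φ y`. For `s ≥ 0`,
`φ (s^{3/2}) = (4/3)√s = (3/2)(8/9)√s`, hence `(c ∓ (8/9) t)^{3/2}` solves `x' = ∓φ x` as long as
the base stays nonnegative; this yields the three curves and the norms of `∇u` along them.
Uniqueness fails at `(1, 0)` because `φ` is not Lipschitz at `0`: both `y ≡ 0` and
`y = ((8/9) t)^{3/2}` solve `y' = φ y, y 0 = 0`.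
-/

open Set

/-- The gradient of `u(x,y) = |x|^{4/3} - |y|^{4/3}`. -/
noncomputable def gradU18 (p : ℝ × ℝ) : ℝ × ℝ :=
  ((4/3) * |p.1| ^ ((1:ℝ)/3) * Real.sign p.1,
    -((4/3) * |p.2| ^ ((1:ℝ)/3) * Real.sign p.2))

/-- First trajectory of the gradient dynamics. -/
noncomputable def gamma1 (t : ℝ) : ℝ × ℝ := ((1 - (8/9) * t) ^ ((3:ℝ)/2), 0)

/-- Second trajectory of the gradient dynamics. -/
noncomputable def gamma2 (t : ℝ) : ℝ × ℝ := (0, (1 + (8/9) * t) ^ ((3:ℝ)/2))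

/-- Third trajectory of the gradient dynamics, starting at `(1,0)` like `gamma1`. -/
noncomputable def gamma3 (t : ℝ) : ℝ × ℝ :=
  ((1 - (8/9) * t) ^ ((3:ℝ)/2), ((8/9) * t) ^ ((3:ℝ)/2))

noncomputable def absRpowFourThirdsDeriv (x : ℝ) : ℝ := (4/3) * |x| ^ ((1:ℝ)/3) * Real.sign x

lemma gradU18_eq (p : ℝ × ℝ) :
    gradU18 p = (absRpowFourThirdsDeriv p.1, -absRpowFourThirdsDeriv p.2) := rfl

@[simp] lemma absRpowFourThirdsDeriv_zero : absRpowFourThirdsDeriv 0 = 0 := by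
  simp [absRpowFourThirdsDeriv]

lemma abs_rpow_mul_sign_rpow {s : ℝ} (hs : 0 ≤ s) {p q : ℝ} (hp : p ≠ 0) (hq : q ≠ 0) :
    |s ^ p| ^ q * Real.sign (s ^ p) = s ^ (p * q) := by
  rcases hs.eq_or_lt with rfl | hs
  · simp [Real.zero_rpow hp, Real.zero_rpow hq, Real.zero_rpow (mul_ne_zero hp hq)]
  · have hsp : 0 < s ^ p := Real.rpow_pos_of_pos hs p
    rw [Real.sign_of_pos hsp, abs_of_pos hsp, mul_one, Real.rpow_mul hs.le]

lemma absRpowFourThirdsDeriv_rpow_three_halves {s : ℝ} (hs : 0 ≤ s) :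
    absRpowFourThirdsDeriv (s ^ ((3:ℝ)/2)) = 4/3 * √s := by
  rw [absRpowFourThirdsDeriv, mul_assoc, abs_rpow_mul_sign_rpow hs (by norm_num) (by norm_num),
    Real.sqrt_eq_rpow]
  norm_num

/-- With `f' = ±8/9` this says that `f ^ (3/2)` solves `x' = ±φ x`. -/
lemma HasDerivAt.rpow_three_halves {f : ℝ → ℝ} {f' t : ℝ} (hf : HasDerivAt f f' t)
    (hft : 0 ≤ f t) :
    HasDerivAt (fun s => f s ^ ((3:ℝ)/2))
      (9/8 * f' * absRpowFourThirdsDeriv (f t ^ ((3:ℝ)/2))) t := by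
  convert hf.rpow_const (p := (3:ℝ)/2) (Or.inr (by norm_num)) using 1
  rw [absRpowFourThirdsDeriv_rpow_three_halves hft, Real.sqrt_eq_rpow]
  norm_num
  ring

lemma gradU18_gamma1 {t : ℝ} (ht : t ≤ 9/8) :
    gradU18 (gamma1 t) = (4/3 * √(1 - 8/9 * t), 0) := by
  simp [gradU18_eq, gamma1,
    absRpowFourThirdsDeriv_rpow_three_halves (by linarith : 0 ≤ 1 - 8/9 * t)]

lemma gradU18_gamma2 {t : ℝ} (ht : -(9/8) ≤ t) :
    gradU18 (gamma2 t) = (0, -(4/3 * √(1 + 8/9 * t))) := by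
  simp [gradU18_eq, gamma2,
    absRpowFourThirdsDeriv_rpow_three_halves (by linarith : 0 ≤ 1 + 8/9 * t)]

lemma gradU18_gamma3 {t : ℝ} (ht₀ : 0 ≤ t) (ht₁ : t ≤ 9/8) :
    gradU18 (gamma3 t) = (4/3 * √(1 - 8/9 * t), -(4/3 * √(8/9 * t))) := by
  simp [gradU18_eq, gamma3,
    absRpowFourThirdsDeriv_rpow_three_halves (by linarith : 0 ≤ 1 - 8/9 * t),
    absRpowFourThirdsDeriv_rpow_three_halves (by linarith : 0 ≤ 8/9 * t)]

lemma hasDerivAt_gamma1 {t : ℝ} (ht : t ≤ 9/8) :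
    HasDerivAt gamma1 (-gradU18 (gamma1 t)) t := by
  have h := (((hasDerivAt_const_mul (8/9 : ℝ)).const_sub 1).rpow_three_halves
    (by linarith)).prodMk (hasDerivAt_const t (0:ℝ))
  exact h.congr_deriv (by simp [gradU18_eq, gamma1])

lemma hasDerivAt_gamma2 {t : ℝ} (ht : -(9/8) ≤ t) :
    HasDerivAt gamma2 (-gradU18 (gamma2 t)) t := by
  have h := (hasDerivAt_const t (0:ℝ)).prodMk
    (((hasDerivAt_const_mul (8/9 : ℝ)).const_add 1).rpow_three_halves (by linarith))
  exact h.congr_deriv (by simp [gradU18_eq, gamma2])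

lemma hasDerivAt_gamma3 {t : ℝ} (ht₀ : 0 ≤ t) (ht₁ : t ≤ 9/8) :
    HasDerivAt gamma3 (-gradU18 (gamma3 t)) t := by
  have h := (((hasDerivAt_const_mul (8/9 : ℝ)).const_sub 1).rpow_three_halves
    (by linarith)).prodMk
      ((hasDerivAt_const_mul (x := t) (8/9 : ℝ)).rpow_three_halves (by positivity))
  exact h.congr_deriv (by simp [gradU18_eq, gamma3])

lemma sqrt_gradU18_gamma1 {t : ℝ} (ht : t ≤ 9/8) :
    √((gradU18 (gamma1 t)).1 ^ 2 + (gradU18 (gamma1 t)).2 ^ 2) = 4/3 * √(1 - 8/9 * t) := by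
  rw [gradU18_gamma1 ht]
  simp [Real.sqrt_sq (by positivity : (0:ℝ) ≤ 4/3 * √(1 - 8/9 * t))]

lemma sqrt_gradU18_gamma2 {t : ℝ} (ht : -(9/8) ≤ t) :
    √((gradU18 (gamma2 t)).1 ^ 2 + (gradU18 (gamma2 t)).2 ^ 2) = 4/3 * √(1 + 8/9 * t) := by
  rw [gradU18_gamma2 ht]
  simp [Real.sqrt_sq (by positivity : (0:ℝ) ≤ 4/3 * √(1 + 8/9 * t))]

lemma sqrt_gradU18_gamma3 {t : ℝ} (ht₀ : 0 ≤ t) (ht₁ : t ≤ 9/8) :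
    √((gradU18 (gamma3 t)).1 ^ 2 + (gradU18 (gamma3 t)).2 ^ 2) = 4/3 := by
  rw [gradU18_gamma3 ht₀ ht₁]
  simp only [neg_sq, mul_pow, Real.sq_sqrt (by linarith : 0 ≤ 1 - 8/9 * t),
    Real.sq_sqrt (by linarith : 0 ≤ 8/9 * t)]
  rw [← mul_add, sub_add_cancel, mul_one, Real.sqrt_sq (by norm_num)]

/-- the explicit curves `γ₁, γ₂, γ₃` solve the gradient dynamics
`γ' = -∇u(γ)` for `u(x,y) = |x|^{4/3} - |y|^{4/3}`; the (Euclidean) norm of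
`∇u` along `γ₁` is `(4/3)√(1-(8/9)t)` (strictly decreasing), along `γ₂` it is
`(4/3)√(1+(8/9)t)` (strictly increasing); `γ₁` and `γ₃` are distinct solutions of
the same initial value problem at `(1,0)`, and `|∇u(γ₃(t))| = 4/3` is constant. -/
theorem stmt_18 :
    -- (a) the three curves solve the gradient dynamics on their domains
    (∀ t ∈ Ico (0:ℝ) (9/8),
      HasDerivWithinAt gamma1 (-(gradU18 (gamma1 t))) (Ico (0:ℝ) (9/8)) t) ∧
    (∀ t ∈ Ici (0:ℝ),
      HasDerivWithinAt gamma2 (-(gradU18 (gamma2 t))) (Ici (0:ℝ)) t) ∧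
    (∀ t ∈ Icc (0:ℝ) (9/8),
      HasDerivWithinAt gamma3 (-(gradU18 (gamma3 t))) (Icc (0:ℝ) (9/8)) t) ∧
    -- (b) the norm of the gradient along `γ₁` and `γ₂`
    (∀ t ∈ Ico (0:ℝ) (9/8),
      Real.sqrt ((gradU18 (gamma1 t)).1 ^ 2 + (gradU18 (gamma1 t)).2 ^ 2)
        = (4/3) * Real.sqrt (1 - (8/9) * t)) ∧
    StrictAntiOn (fun t : ℝ => (4/3) * Real.sqrt (1 - (8/9) * t)) (Ico (0:ℝ) (9/8)) ∧
    (∀ t ∈ Ici (0:ℝ),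
      Real.sqrt ((gradU18 (gamma2 t)).1 ^ 2 + (gradU18 (gamma2 t)).2 ^ 2)
        = (4/3) * Real.sqrt (1 + (8/9) * t)) ∧
    StrictMonoOn (fun t : ℝ => (4/3) * Real.sqrt (1 + (8/9) * t)) (Ici (0:ℝ)) ∧
    -- (c) `γ₁` and `γ₃` solve the same initial value problem but differ, and the
    -- norm of the gradient along `γ₃` is constant
    gamma1 0 = (1, 0) ∧ gamma3 0 = (1, 0) ∧
    (∃ t ∈ Icc (0:ℝ) (9/8), gamma1 t ≠ gamma3 t) ∧
    (∀ t ∈ Icc (0:ℝ) (9/8),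
      Real.sqrt ((gradU18 (gamma3 t)).1 ^ 2 + (gradU18 (gamma3 t)).2 ^ 2) = 4/3) := by
  refine ⟨fun t ht => (hasDerivAt_gamma1 ht.2.le).hasDerivWithinAt,
    fun t ht => (hasDerivAt_gamma2 (by linarith [mem_Ici.mp ht])).hasDerivWithinAt,
    fun t ht => (hasDerivAt_gamma3 ht.1 ht.2).hasDerivWithinAt,
    fun t ht => sqrt_gradU18_gamma1 ht.2.le, ?_,
    fun t ht => sqrt_gradU18_gamma2 (by linarith [mem_Ici.mp ht]), ?_,
    by simp [gamma1], by simp [gamma3], ?_, fun t ht => sqrt_gradU18_gamma3 ht.1 ht.2⟩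
  · intro a _ b hb hab
    have := Real.sqrt_lt_sqrt (by linarith [hb.2]) (by linarith : 1 - 8/9 * b < 1 - 8/9 * a)
    dsimp only
    linarith
  · intro a ha b _ hab
    have := Real.sqrt_lt_sqrt (by linarith [mem_Ici.mp ha])
      (by linarith : 1 + 8/9 * a < 1 + 8/9 * b)
    dsimp only
    linarith
  · refine ⟨9/8, ⟨by norm_num, le_rfl⟩, fun h => ?_⟩
    have := congrArg Prod.snd h
    norm_num [gamma1, gamma3] at this
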